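/- arXiv:1904.08313 — 2 statements merged into one kernel-verified Lean document; each statement's English description precedes it below -/
import Mathlib

section
/- Let G be a group in which every element has a finite conjugacy class (an FC group). If G is not abelian-by-finite (i.e., G has no abelian subgroup of finite index), then there exist sequences (gᵢ) and (hᵢ) in G such that for each i, gᵢ and hᵢ do not commute, and such that the subgroups Gᵢ generated by the conjugacy classes of gᵢ and hᵢ satisfy: every element of Gᵢ commutes with every element of Gⱼ whenever i ≠ j. -/
/-!
The centralizer of `g` has index `|conjugatesOf g|`, so in an FC group the centralizer of a
finite set has finite index. The normal closure of `{g, h}` is generated by the finitely many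
conjugates of `g` and `h`, so its centralizer is a normal subgroup of finite index. Given finitely
many pairs already chosen, the intersection of these centralizers is therefore a normal subgroup of
finite index; since `G` is not abelian-by-finite it contains a non-commuting pair, whose normal
closure it then contains. Such a choice step yields the whole sequence
(`exists_seq_of_forall_finset_exists`).
-/

open Subgroup Group

section

variable {G : Type*} [Group G]

theorem conjugatesOf_eq_setOf (g : G) : conjugatesOf g = {x | ∃ y, x = y * g * y⁻¹} := by
  ext x
  simp [conjugatesOf, isConj_iff, eq_comm]

theorem Subgroup.normalClosure_pair_eq_closure (a b : G) :
    normalClosure {a, b} = closure (conjugatesOf a ∪ conjugatesOf b) := by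
  simp [normalClosure, conjugatesOfSet]

theorem Subgroup.index_centralizer_singleton (g : G) :
    (centralizer {g}).index = (conjugatesOf g).ncard := by
  rw [centralizer_eq_comap_stabilizer]
  refine (index_comap_of_surjective _ ConjAct.toConjAct.surjective).trans ?_
  rw [MulAction.index_stabilizer]
  congr 1
  ext x
  exact ConjAct.mem_orbit_conjAct.trans isConj_comm

theorem Subgroup.finiteIndex_centralizer_of_finite (hfc : ∀ g : G, (conjugatesOf g).Finite)
    {s : Set G} (hs : s.Finite) : (centralizer s).FiniteIndex := by
  rw [centralizer_eq_iInf, ← hs.coe_toFinset]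
  refine finiteIndex_iInf' _ fun g _ => ⟨?_⟩
  rw [index_centralizer_singleton]
  exact (Set.ncard_pos (hfc g)).mpr ⟨g, mem_conjugatesOf_self⟩ |>.ne'

theorem Subgroup.finiteIndex_centralizer_normalClosure
    (hfc : ∀ g : G, (conjugatesOf g).Finite) {s : Set G} (hs : s.Finite) :
    (centralizer (normalClosure s : Set G)).FiniteIndex := by
  rw [normalClosure, centralizer_closure]
  exact finiteIndex_centralizer_of_finite hfc (hs.biUnion fun g _ => hfc g)

theorem exists_not_commute_normalClosure_le_centralizer
    (hfc : ∀ g : G, (conjugatesOf g).Finite)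
    (hG : ∀ A : Subgroup G, A.FiniteIndex → ∃ a ∈ A, ∃ b ∈ A, ¬Commute a b)
    (t : Finset (G × G)) :
    ∃ p : G × G, ¬Commute p.1 p.2 ∧
      ∀ q ∈ t, normalClosure {p.1, p.2} ≤ centralizer (normalClosure {q.1, q.2} : Set G) := by
  set C := ⨅ q ∈ t, centralizer (normalClosure {q.1, q.2} : Set G)
  have hC : C.FiniteIndex := finiteIndex_iInf' _ fun q _ =>
    finiteIndex_centralizer_normalClosure hfc (Set.toFinite _)
  have : C.Normal := normal_iInf_normal fun q => normal_iInf_normal fun _ => inferInstance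
  obtain ⟨a, ha, b, hb, hab⟩ := hG C hC
  have hab_le : normalClosure {a, b} ≤ C :=
    normalClosure_le_normal (Set.insert_subset ha (Set.singleton_subset_iff.mpr hb))
  exact ⟨(a, b), hab, fun q hq => hab_le.trans (iInf₂_le q hq)⟩

end

/-- In an FC group `G` that is not abelian-by-finite, there are sequences `(gᵢ), (hᵢ)` with
`gᵢ, hᵢ` non-commuting such that the subgroups `Gᵢ` generated by the conjugacy classes of
`gᵢ` and `hᵢ` pairwise commute elementwise. -/
theorem exists_commuting_nonabelian_subgroups {G : Type*} [Group G]
    (hfc : ∀ g : G, Set.Finite {x : G | ∃ y : G, x = y * g * y⁻¹})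
    (hG : ¬ ∃ A : Subgroup G, A.FiniteIndex ∧ ∀ a ∈ A, ∀ b ∈ A, a * b = b * a) :
    ∃ g h : ℕ → G, (∀ i, ¬ Commute (g i) (h i)) ∧
      ∀ i j, i ≠ j →
        ∀ a ∈ Subgroup.closure ({x : G | ∃ y : G, x = y * g i * y⁻¹} ∪
            {x : G | ∃ y : G, x = y * h i * y⁻¹}),
        ∀ b ∈ Subgroup.closure ({x : G | ∃ y : G, x = y * g j * y⁻¹} ∪
            {x : G | ∃ y : G, x = y * h j * y⁻¹}),
          Commute a b := by
  have hfc' (g : G) : (conjugatesOf g).Finite := conjugatesOf_eq_setOf g ▸ hfc g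
  have hG' : ∀ A : Subgroup G, A.FiniteIndex → ∃ a ∈ A, ∃ b ∈ A, ¬Commute a b := by
    push Not at hG
    exact hG
  obtain ⟨p, hp, hcomm⟩ := exists_seq_of_forall_finset_exists (fun p : G × G => ¬Commute p.1 p.2)
    (fun q p => normalClosure {p.1, p.2} ≤ centralizer (normalClosure {q.1, q.2} : Set G))
    fun t _ => exists_not_commute_normalClosure_le_centralizer hfc' hG' t
  refine ⟨fun i => (p i).1, fun i => (p i).2, hp, fun i j hij a ha b hb => ?_⟩
  simp only [← conjugatesOf_eq_setOf, ← normalClosure_pair_eq_closure] at ha hb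
  rcases hij.lt_or_gt with h | h
  · exact hcomm i j h hb a ha
  · exact (hcomm j i h ha b hb).symm
end

section
/- Let G be a group. If G^fin = G and G is generated by finitely many elements g₁, …, g_n, then the centralizer of {g₁, …, g_n} equals the center of G and has finite index in G. -/
theorem aux_fi {G : Type*} [Group G] (g : G)
    (hfc : Set.Finite {x : G | ∃ y : G, x = y * g * y⁻¹}) :
    (Subgroup.centralizer {g}).FiniteIndex := by
  have horb : MulAction.orbit (ConjAct G) g = {x : G | ∃ y : G, x = y * g * y⁻¹} := by
    ext x
    constructor
    · rintro ⟨y, rfl⟩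
      exact ⟨ConjAct.ofConjAct y, rfl⟩
    · rintro ⟨y, rfl⟩
      exact ⟨ConjAct.toConjAct y, rfl⟩
  have hidx : (Subgroup.centralizer {g}).index
      = (MulAction.stabilizer (ConjAct G) g).index := by
    rw [Subgroup.centralizer_eq_comap_stabilizer]
    exact Subgroup.index_comap_of_surjective _ ConjAct.toConjAct.surjective
  constructor
  rw [hidx, MulAction.index_stabilizer, horb]
  exact Set.ncard_ne_zero_of_mem (show g ∈ _ from ⟨1, by simp⟩) hfc

/-- If every element of `G` has finite conjugacy class and `G` is generated by a finite set
`s`, then the centralizer of `s` equals the set of the center of `G` and has finite index. -/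
theorem centralizer_eq_center_of_fc_fg {G : Type*} [Group G]
    (hfc : ∀ g : G, Set.Finite {x : G | ∃ y : G, x = y * g * y⁻¹})
    (s : Finset G) (hgen : Subgroup.closure (s : Set G) = ⊤) :
    Subgroup.centralizer (s : Set G) = Subgroup.center G ∧
      (Subgroup.center G).FiniteIndex := by
  have heq : Subgroup.centralizer (s : Set G) = Subgroup.center G := by
    apply le_antisymm
    · intro x hx
      rw [Subgroup.mem_center_iff]
      intro h
      have hle : Subgroup.closure (s : Set G) ≤ Subgroup.centralizer {x} := by
        rw [Subgroup.closure_le]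
        intro a ha
        rw [SetLike.mem_coe, Subgroup.mem_centralizer_iff]
        rintro b rfl
        exact (hx a ha).symm
      have := hle (hgen ▸ Subgroup.mem_top h)
      exact (this x rfl).symm
    · exact Subgroup.center_le_centralizer _
  refine ⟨heq, ?_⟩
  rw [← heq]
  have h2 : Subgroup.centralizer (s : Set G) = ⨅ g ∈ s, Subgroup.centralizer {g} := by
    apply le_antisymm
    · exact le_iInf fun g => le_iInf fun hg =>
        Subgroup.centralizer_le (Set.singleton_subset_iff.mpr hg)
    · intro x hx
      rw [Subgroup.mem_centralizer_iff]
      intro a ha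
      simp only [Subgroup.mem_iInf] at hx
      exact Subgroup.mem_centralizer_iff.mp (hx a ha) a rfl
  rw [h2]
  exact Subgroup.finiteIndex_iInf' _ fun g _ => aux_fi g (hfc g)
end
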